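/- arXiv:2108.04693 — 5 statements merged into one kernel-verified Lean document; each statement's English description precedes it below -/
import Mathlib

section
/- Let n ≥ 1, let B₁, B₂ be endomorphisms of kⁿ, let i ∈ kⁿ, and let j : kⁿ → k be a linear functional. Suppose the preprojective relation B₁∘B₂ − B₂∘B₁ + (i⊗j) = 0 holds, where i⊗j denotes the endomorphism v ↦ j(v)·i, and suppose i is a cyclic vector for B₁, B₂. Then j = 0. (Lemma 2.9: every χ₁-stable point (B_a, B_{a*}, i, j) of μ⁻¹(0) has j = 0.) -/
/-!
Write `M_w` for the product of `B₁, B₂` along a word `w`; we show `j (M_w i) = 0` by strong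
induction on the length of `w`, which suffices since the `M_w i` span the space by cyclicity.
If `j` kills `M_v i` for all shorter words `v`, then `B₁ B₂ - B₂ B₁ = -(i ⊗ j)` lets one swap
adjacent letters, so `M_w i` only depends on the numbers `a` and `b` of letters `B₁` and `B₂`.
Expanding `0 = tr (B₁ ^ a [B₁, B₂ ^ (b + 1)])` as `∑_{r + s = b} tr (B₁ ^ a B₂ ^ r [B₁, B₂] B₂ ^ s)`
and using `tr (f (i ⊗ j) g) = j (g f i)` turns this into `(b + 1) j (M_w i) = 0`.
-/

/-- `i` is a cyclic vector for the family of endomorphisms `B` of `V`: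
the only subspace containing `i` and invariant under every `B s` is all of `V`. -/
def IsCyclicVector {k : Type*} [Field k] {V : Type*} [AddCommGroup V] [Module k V]
    {m : ℕ} (B : Fin m → Module.End k V) (i : V) : Prop :=
  ∀ W : Submodule k V, i ∈ W → (∀ s, ∀ v ∈ W, B s v ∈ W) → W = ⊤

open Finset LinearMap

theorem mul_pow_succ_sub_pow_succ_mul {R : Type*} [Ring R] (a x : R) (n : ℕ) :
    a * x ^ (n + 1) - x ^ (n + 1) * a =
      ∑ p ∈ antidiagonal n, x ^ p.1 * (a * x - x * a) * x ^ p.2 := by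
  induction n with
  | zero => simp
  | succ n ih =>
    rw [Nat.sum_antidiagonal_succ', pow_zero, mul_one]
    have shift : ∑ p ∈ antidiagonal n, x ^ p.1 * (a * x - x * a) * x ^ (p.2 + 1) =
        (∑ p ∈ antidiagonal n, x ^ p.1 * (a * x - x * a) * x ^ p.2) * x := by
      simp only [sum_mul, pow_succ, mul_assoc]
    rw [shift, ← ih, pow_succ x (n + 1)]
    noncomm_ring

section Trace

variable {R M : Type*} [CommRing R] [AddCommGroup M] [Module R M]

theorem trace_mul_commutator_eq_zero {c a : Module.End R M} (h : Commute c a)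
    (x : Module.End R M) : trace R M (c * (a * x - x * a)) = 0 := by
  rw [mul_sub, map_sub, sub_eq_zero, ← mul_assoc, h.eq, mul_assoc, trace_mul_comm,
    mul_assoc]

variable [Module.Free R M] [Module.Finite R M]

theorem trace_mul_smulRight_mul (f g : Module.End R M) (j : M →ₗ[R] R) (x : M) :
    trace R M (f * j.smulRight x * g) = j (g (f x)) := by
  have : f * j.smulRight x * g = (j ∘ₗ g).smulRight (f x) := by
    ext v
    simp
  rw [this, trace_smulRight, comp_apply]

end Trace

section Preprojective

variable {R M : Type*} [CommRing R] [AddCommGroup M] [Module R M]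
  {B : Fin 2 → Module.End R M} {i : M} {j : M →ₗ[R] R}

theorem apply_comm_of_preprojective (hrel : B 0 * B 1 - B 1 * B 0 + j.smulRight i = 0)
    {v : M} (hv : j v = 0) : B 0 (B 1 v) = B 1 (B 0 v) := by
  simpa [hv, sub_eq_zero] using congr($hrel v)

theorem word_apply_eq_of_perm (hrel : B 0 * B 1 - B 1 * B 0 + j.smulRight i = 0)
    {w w' : List (Fin 2)} (hp : w.Perm w')
    (hj : ∀ v : List (Fin 2), v.length + 2 ≤ w.length → j ((v.map B).prod i) = 0) :
    (w.map B).prod i = (w'.map B).prod i := by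
  induction hp with
  | nil => rfl
  | cons x _ ih =>
    simp only [List.map_cons, List.prod_cons, Module.End.mul_apply]
    rw [ih fun v hv => hj v (by simp only [List.length_cons]; omega)]
  | swap x y l =>
    have hcomm := apply_comm_of_preprojective hrel (hj l (by simp))
    simp only [List.map_cons, List.prod_cons, Module.End.mul_apply]
    fin_cases x <;> fin_cases y <;> simp [hcomm]
  | trans h₁ _ ih₁ ih₂ => rw [ih₁ hj, ih₂ fun v hv => hj v (h₁.length_eq ▸ hv)]

variable [Module.Free R M] [Module.Finite R M]

theorem sum_antidiagonal_apply_eq_zero (hrel : B 0 * B 1 - B 1 * B 0 + j.smulRight i = 0)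
    (a b : ℕ) : ∑ p ∈ antidiagonal b, j ((B 1 ^ p.2 * B 0 ^ a * B 1 ^ p.1) i) = 0 := by
  have htr := trace_mul_commutator_eq_zero ((Commute.refl (B 0)).pow_left a) (B 1 ^ (b + 1))
  rw [mul_pow_succ_sub_pow_succ_mul, eq_neg_of_add_eq_zero_left hrel, mul_sum, map_sum] at htr
  simpa [← mul_assoc, trace_mul_smulRight_mul] using htr

theorem j_word_apply_eq_zero [IsDomain R] [CharZero R]
    (hrel : B 0 * B 1 - B 1 * B 0 + j.smulRight i = 0) (w : List (Fin 2)) :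
    j ((w.map B).prod i) = 0 := by
  have ih (v : List (Fin 2)) (_ : v.length < w.length) : j ((v.map B).prod i) = 0 :=
    j_word_apply_eq_zero hrel v
  have hperm : ∀ p ∈ antidiagonal (w.count 1),
      (List.replicate p.2 (1 : Fin 2) ++ List.replicate (w.count 0) 0 ++
        List.replicate p.1 1).Perm w := by
    intro p hp
    rw [Finset.HasAntidiagonal.mem_antidiagonal] at hp
    rw [List.perm_iff_count]
    intro x
    fin_cases x <;> simp [List.count_replicate, ← hp, add_comm]
  have hterm : ∀ p ∈ antidiagonal (w.count 1),
      j ((B 1 ^ p.2 * B 0 ^ w.count 0 * B 1 ^ p.1) i) = j ((w.map B).prod i) := by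
    intro p hp
    rw [← word_apply_eq_of_perm hrel (hperm p hp)]
    · simp [List.prod_append, List.map_replicate, List.prod_replicate]
    · intro v hv
      exact ih v (by have := (hperm p hp).length_eq; omega)
  have hsum := sum_antidiagonal_apply_eq_zero hrel (w.count 0) (w.count 1)
  rw [sum_congr rfl hterm, sum_const, Nat.card_antidiagonal] at hsum
  exact (smul_eq_zero.mp hsum).resolve_left (Nat.succ_ne_zero _)
termination_by w.length

end Preprojective

theorem IsCyclicVector.span_word_apply_eq_top {k V : Type*} [Field k] [AddCommGroup V]
    [Module k V] {m : ℕ} {B : Fin m → Module.End k V} {i : V} (h : IsCyclicVector B i) :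
    Submodule.span k (Set.range fun w : List (Fin m) => (w.map B).prod i) = ⊤ := by
  set S := Submodule.span k (Set.range fun w : List (Fin m) => (w.map B).prod i)
  refine h S (Submodule.subset_span ⟨[], by simp⟩) fun s v hv => ?_
  have hS : S ≤ S.comap (B s) := by
    rw [Submodule.span_le]
    rintro _ ⟨w, rfl⟩
    exact Submodule.subset_span ⟨s :: w, by simp⟩
  exact hS hv

theorem j_eq_zero_of_preprojective_of_cyclic_general
    {k : Type*} [Field k] [CharZero k]
    {n : ℕ}
    (B₁ B₂ : Module.End k (Fin n → k)) (i : Fin n → k)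
    (j : (Fin n → k) →ₗ[k] k)
    (hrel : (B₁ ∘ₗ B₂ - B₂ ∘ₗ B₁ + j.smulRight i : (Fin n → k) →ₗ[k] (Fin n → k)) = 0)
    (hcyc : IsCyclicVector ![B₁, B₂] i) :
    j = 0 := by
  refine ext_on hcyc.span_word_apply_eq_top ?_
  rintro _ ⟨w, rfl⟩
  exact j_word_apply_eq_zero hrel w

/-- Lemma 2.9: if `B₁ ∘ B₂ - B₂ ∘ B₁ + i ⊗ j = 0` and `i` is a cyclic vector for
`B₁, B₂`, then `j = 0`. -/
theorem j_eq_zero_of_preprojective_of_cyclic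
    {k : Type*} [Field k] [IsAlgClosed k] [CharZero k]
    {n : ℕ} (hn : 1 ≤ n)
    (B₁ B₂ : Module.End k (Fin n → k)) (i : Fin n → k)
    (j : (Fin n → k) →ₗ[k] k)
    (hrel : (B₁ ∘ₗ B₂ - B₂ ∘ₗ B₁ + j.smulRight i : (Fin n → k) →ₗ[k] (Fin n → k)) = 0)
    (hcyc : IsCyclicVector ![B₁, B₂] i) :
    j = 0 :=
  j_eq_zero_of_preprojective_of_cyclic_general B₁ B₂ i j hrel hcyc
end

section
/- Let n ≥ 1, let B₁, B₂ be commuting endomorphisms of kⁿ, and let i ∈ kⁿ. Then the following are equivalent: (a) the representation (B₁, B₂, i) of dimension vector (1,n) is θ-semistable for θ = 1; (b) it is θ-stable for θ = 1; (c) i is a cyclic vector for B₁, B₂. (This is the content of the proof of Theorem 2.2: a point (B₁,B₂,i) of Z is χ-stable for χ = det if and only if the corresponding k[x,y]-module kⁿ is generated by i.) -/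
/-- `(Winf, W0)` is a subrepresentation of the framed representation `(B, i)`. -/
def IsSubrep {k : Type*} [Field k] {V : Type*} [AddCommGroup V] [Module k V]
    {m : ℕ} (B : Fin m → Module.End k V) (i : V)
    (Winf : Submodule k k) (W0 : Submodule k V) : Prop :=
  (∀ s, ∀ v ∈ W0, B s v ∈ W0) ∧ (∀ c ∈ Winf, c • i ∈ W0)

/-- The value of the stability parameter `θ = 1` on a pair of subspaces. -/
noncomputable def thetaVal (k : Type*) [Field k] (n : ℕ)
    (Winf : Submodule k k) (W0 : Submodule k (Fin n → k)) : ℤ :=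
  -(n : ℤ) * (Module.finrank k Winf : ℤ) + (Module.finrank k W0 : ℤ)

/-- The framed representation `(B, i)` of dimension vector `(1, n)` is `θ`-semistable
for `θ = 1`. -/
def IsThetaSemistable {k : Type*} [Field k] {n m : ℕ}
    (B : Fin m → Module.End k (Fin n → k)) (i : Fin n → k) : Prop :=
  ∀ Winf : Submodule k k, ∀ W0 : Submodule k (Fin n → k), IsSubrep B i Winf W0 →
    ¬(Winf = ⊥ ∧ W0 = ⊥) → ¬(Winf = ⊤ ∧ W0 = ⊤) → 0 ≤ thetaVal k n Winf W0

/-- The framed representation `(B, i)` of dimension vector `(1, n)` is `θ`-stable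
for `θ = 1`. -/
def IsThetaStable {k : Type*} [Field k] {n m : ℕ}
    (B : Fin m → Module.End k (Fin n → k)) (i : Fin n → k) : Prop :=
  ∀ Winf : Submodule k k, ∀ W0 : Submodule k (Fin n → k), IsSubrep B i Winf W0 →
    ¬(Winf = ⊥ ∧ W0 = ⊥) → ¬(Winf = ⊤ ∧ W0 = ⊤) → 0 < thetaVal k n Winf W0

section

variable {k : Type*} [Field k] {n m : ℕ}

theorem thetaVal_bot (W0 : Submodule k (Fin n → k)) :
    thetaVal k n ⊥ W0 = Module.finrank k W0 := by
  simp [thetaVal]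

theorem thetaVal_top (W0 : Submodule k (Fin n → k)) :
    thetaVal k n ⊤ W0 = Module.finrank k W0 - n := by
  simp [thetaVal, neg_add_eq_sub]

theorem thetaVal_top_neg_of_ne_top {W0 : Submodule k (Fin n → k)} (hW0 : W0 ≠ ⊤) :
    thetaVal k n ⊤ W0 < 0 := by
  have hlt : Module.finrank k W0 < n := by simpa using Submodule.finrank_lt hW0
  rw [thetaVal_top]
  omega

theorem isSubrep_top_iff {V : Type*} [AddCommGroup V] [Module k V]
    {B : Fin m → Module.End k V} {i : V} {W0 : Submodule k V} :
    IsSubrep B i ⊤ W0 ↔ (∀ s, ∀ v ∈ W0, B s v ∈ W0) ∧ i ∈ W0 :=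
  and_congr_right fun _ => ⟨fun h => by simpa using h 1 trivial, fun hi c _ => W0.smul_mem c hi⟩

variable {B : Fin m → Module.End k (Fin n → k)} {i : Fin n → k}

theorem IsThetaStable.isThetaSemistable (h : IsThetaStable B i) : IsThetaSemistable B i :=
  fun Winf W0 hsub h1 h2 => (h Winf W0 hsub h1 h2).le

theorem IsThetaSemistable.isCyclicVector (h : IsThetaSemistable B i) : IsCyclicVector B i := by
  intro W hiW hinv
  by_contra hW
  have hsub : IsSubrep B i ⊤ W := isSubrep_top_iff.mpr ⟨hinv, hiW⟩
  exact (thetaVal_top_neg_of_ne_top hW).not_ge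
    (h ⊤ W hsub (fun h => top_ne_bot h.1) (fun h => hW h.2))

theorem IsCyclicVector.isThetaStable (h : IsCyclicVector B i) : IsThetaStable B i := by
  intro Winf W0 hsub h1 h2
  rcases eq_bot_or_eq_top Winf with rfl | rfl
  · have hpos : 1 ≤ Module.finrank k W0 :=
      Submodule.one_le_finrank_iff.mpr fun hb => h1 ⟨rfl, hb⟩
    rw [thetaVal_bot]
    omega
  · obtain ⟨hinv, hi⟩ := isSubrep_top_iff.mp hsub
    exact absurd ⟨rfl, h W0 hi hinv⟩ h2

end

theorem semistable_tfae_stable_tfae_cyclic_general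
    {k : Type*} [Field k]
    {n : ℕ}
    (B₁ B₂ : Module.End k (Fin n → k)) (i : Fin n → k) :
    [IsThetaSemistable ![B₁, B₂] i,
     IsThetaStable ![B₁, B₂] i,
     IsCyclicVector ![B₁, B₂] i].TFAE := by
  tfae_have 1 → 3 := IsThetaSemistable.isCyclicVector
  tfae_have 3 → 2 := IsCyclicVector.isThetaStable
  tfae_have 2 → 1 := IsThetaStable.isThetaSemistable
  tfae_finish

/-- The content of the proof of Theorem 2.2: for commuting `B₁, B₂` the conditions
(a) `θ`-semistable for `θ = 1`, (b) `θ`-stable for `θ = 1`, and (c) `i` is a cyclic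
vector for `B₁, B₂`, are all equivalent. -/
theorem semistable_tfae_stable_tfae_cyclic
    {k : Type*} [Field k] [IsAlgClosed k] [CharZero k]
    {n : ℕ} (hn : 1 ≤ n)
    (B₁ B₂ : Module.End k (Fin n → k)) (i : Fin n → k)
    (hcomm : B₁ * B₂ = B₂ * B₁) :
    [IsThetaSemistable ![B₁, B₂] i,
     IsThetaStable ![B₁, B₂] i,
     IsCyclicVector ![B₁, B₂] i].TFAE :=
  semistable_tfae_stable_tfae_cyclic_general B₁ B₂ i
end

section
/- Let ι be a finite set of vertices with a distinguished element o, let (V_m)_{m∈ι} be finite-dimensional k-vector spaces with dim V_o = 1, let E be a finite set of edges with source and target maps s, t : E → ι, and for each e ∈ E let B_e : V_{s(e)} → V_{t(e)} and B_e^* : V_{t(e)} → V_{s(e)} be k-linear maps. If for every vertex m ≠ o the preprojective relation Σ_{e : t(e)=m} B_e ∘ B_e^* − Σ_{e : s(e)=m} B_e^* ∘ B_e = 0 holds in End(V_m), then the same relation also holds at the vertex o: Σ_{e : t(e)=o} B_e ∘ B_e^* − Σ_{e : s(e)=o} B_e^* ∘ B_e = 0. (This is the general statement behind Remark 3.5(2):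 any point (B,i,j) ∈ μ⁻¹(0) for the framed McKay quiver with one-dimensional framing vertex automatically satisfies j∘i = 0.) -/
open Finset

/-- The preprojective expression at a vertex `m` of a quiver with vertex set `ι`,
edge set `E`, source/target maps `s, t`, and linear maps `B e : V (s e) → V (t e)`,
`Bs e : V (t e) → V (s e)`:
`Σ_{e : t e = m} B e ∘ Bs e − Σ_{e : s e = m} Bs e ∘ B e ∈ End (V m)`. -/
noncomputable def preprojAt {k : Type*} [Field k]
    {ι : Type*} [Fintype ι] [DecidableEq ι]
    {V : ι → Type*} [∀ m, AddCommGroup (V m)] [∀ m, Module k (V m)]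
    {E : Type*} [Fintype E] (s t : E → ι)
    (B : ∀ e, V (s e) →ₗ[k] V (t e)) (Bs : ∀ e, V (t e) →ₗ[k] V (s e))
    (m : ι) : Module.End k (V m) :=
  (∑ e : E, if h : t e = m then (h ▸ (B e ∘ₗ Bs e) : Module.End k (V m)) else 0)
    - ∑ e : E, if h : s e = m then (h ▸ (Bs e ∘ₗ B e) : Module.End k (V m)) else 0

/-
Each edge `e` contributes `B e ∘ Bs e` at its target and `-(Bs e ∘ B e)` at its source, and these
have opposite traces, so the traces of the preprojective expressions sum to zero over all
vertices. If the relation holds away from `o`, the expression at `o` therefore has trace zero,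
and an endomorphism of a one-dimensional space is determined by its trace.
-/

lemma LinearMap.eq_zero_of_trace_eq_zero_of_finrank_eq_one {k W : Type*} [Field k]
    [AddCommGroup W] [Module k W] [FiniteDimensional k W] (hW : Module.finrank k W = 1)
    {f : Module.End k W} (hf : LinearMap.trace k W f = 0) : f = 0 := by
  obtain ⟨c, rfl, -⟩ := f.existsUnique_eq_smul_id_of_finrank_eq_one hW
  rw [map_smul, LinearMap.trace_id, hW, Nat.cast_one, smul_eq_mul, mul_one] at hf
  rw [hf, zero_smul]

section

variable {k : Type*} [Field k] {ι : Type*} [Fintype ι] [DecidableEq ι]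
  {V : ι → Type*} [∀ m, AddCommGroup (V m)] [∀ m, Module k (V m)]

lemma sum_trace_dite_cast {a : ι} (f : Module.End k (V a)) :
    ∑ m, LinearMap.trace k (V m) (if h : a = m then (h ▸ f : Module.End k (V m)) else 0) =
      LinearMap.trace k (V a) f := by
  rw [Finset.sum_eq_single a (fun m _ hm => by rw [dif_neg (Ne.symm hm), map_zero])
    (fun h => absurd (Finset.mem_univ a) h), dif_pos rfl]

lemma sum_trace_preprojAt [∀ m, FiniteDimensional k (V m)] {E : Type*} [Fintype E]
    (s t : E → ι) (B : ∀ e, V (s e) →ₗ[k] V (t e)) (Bs : ∀ e, V (t e) →ₗ[k] V (s e)) :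
    ∑ m, LinearMap.trace k (V m) (preprojAt s t B Bs m) = 0 := by
  simp only [preprojAt, map_sub, map_sum, Finset.sum_sub_distrib]
  rw [Finset.sum_comm, Finset.sum_comm (γ := ι)]
  simp only [sum_trace_dite_cast]
  rw [sub_eq_zero]
  exact Finset.sum_congr rfl fun e _ => (LinearMap.trace_comp_comm' (B e) (Bs e)).symm

end

theorem preproj_at_framing_vertex_general
    {k : Type*} [Field k]
    {ι : Type*} [Fintype ι] [DecidableEq ι] (o : ι)
    {V : ι → Type*} [∀ m, AddCommGroup (V m)] [∀ m, Module k (V m)]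
    [∀ m, FiniteDimensional k (V m)]
    (hVo : Module.finrank k (V o) = 1)
    {E : Type*} [Fintype E] (s t : E → ι)
    (B : ∀ e, V (s e) →ₗ[k] V (t e)) (Bs : ∀ e, V (t e) →ₗ[k] V (s e))
    (hrel : ∀ m : ι, m ≠ o → preprojAt s t B Bs m = 0) :
    preprojAt s t B Bs o = 0 := by
  have h_trace : LinearMap.trace k (V o) (preprojAt s t B Bs o) = 0 := by
    rw [← sum_trace_preprojAt s t B Bs,
      Finset.sum_eq_single_of_mem o (Finset.mem_univ o)
        fun m _ hm => by rw [hrel m hm, map_zero]]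
  exact LinearMap.eq_zero_of_trace_eq_zero_of_finrank_eq_one hVo h_trace

/-- Remark 3.5(2), in general form: if the framing vertex `o` carries a one-dimensional
vector space and the preprojective relation holds at every vertex `m ≠ o`, then it also
holds at `o`. -/
theorem preproj_at_framing_vertex
    {k : Type*} [Field k] [IsAlgClosed k] [CharZero k]
    {ι : Type*} [Fintype ι] [DecidableEq ι] (o : ι)
    {V : ι → Type*} [∀ m, AddCommGroup (V m)] [∀ m, Module k (V m)]
    [∀ m, FiniteDimensional k (V m)]
    (hVo : Module.finrank k (V o) = 1)
    {E : Type*} [Fintype E] (s t : E → ι)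
    (B : ∀ e, V (s e) →ₗ[k] V (t e)) (Bs : ∀ e, V (t e) →ₗ[k] V (s e))
    (hrel : ∀ m : ι, m ≠ o → preprojAt s t B Bs m = 0) :
    preprojAt s t B Bs o = 0 :=
  preproj_at_framing_vertex_general o hVo s t B Bs hrel
end

section
/- Let n ≥ 1 and let B₁, B₂ be n×n matrices over k whose commutator B₁B₂ − B₂B₁ has rank at most one. Then B₁ and B₂ can be simultaneously conjugated to upper triangular form: there exists g ∈ GL(n,k) such that gB₁g⁻¹ and gB₂g⁻¹ are both upper triangular (equivalently, there is a complete flag 0 = F₀ ⊂ F₁ ⊂ ⋯ ⊂ F_n = kⁿ with dim F_r = r that is invariant under both B₁ and B₂). (This is the linear algebra statement used in the proof of Lemma 2.9.) -/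
/-!
Shifting `f` by an eigenvalue we may assume `ker f ≠ 0`. If `[f, g]` vanishes on `ker f`, then
`ker f` is `g`-stable and an eigenvector of `g` in it is a common eigenvector. Otherwise
`[f, g] x = f (g x) ≠ 0` for some `x ∈ ker f`; since `[f, g]` has rank one, its range is spanned by
this vector and so lies in `range f`, which makes `range f` a proper nonzero subspace stable under
`f` and `g`, and induction on the dimension applies. The hypothesis passes to the transposes, whose
common eigenvector cuts out a common invariant hyperplane; inducting once more yields a basis in
which both maps are upper triangular.
-/

open Module Submodule

namespace Module.End

variable {K V : Type*} [Field K] [AddCommGroup V] [Module K V]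

section

open LinearMap

lemma finrank_range_commutator_restrict_le [FiniteDimensional K V] {f g : End K V}
    {p : Submodule K V} (hf : Set.MapsTo f p p) (hg : Set.MapsTo g p p) :
    finrank K (range (f.restrict hf * g.restrict hg - g.restrict hg * f.restrict hf)) ≤
      finrank K (range (f * g - g * f)) := by
  rw [← finrank_map_subtype_eq]
  refine finrank_mono ?_
  rintro _ ⟨_, ⟨x, rfl⟩, rfl⟩
  exact ⟨x, rfl⟩

lemma finrank_range_commutator_dualMap [FiniteDimensional K V] (f g : End K V) :
    finrank K (range (f.dualMap * g.dualMap - g.dualMap * f.dualMap)) =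
      finrank K (range (f * g - g * f)) := by
  have hdual : f.dualMap * g.dualMap - g.dualMap * f.dualMap = -(f * g - g * f).dualMap := by
    ext φ x
    simp [dualMap_apply]
  rw [hdual, range_neg, finrank_range_dualMap_eq_finrank_range]

lemma mapsTo_ker_or_range_commutator_le [FiniteDimensional K V] (f g : End K V)
    (h : finrank K (range (f * g - g * f)) ≤ 1) :
    Set.MapsTo g (ker f) (ker f) ∨
      (range (f * g - g * f) ≤ range f ∧ range (f * g - g * f) ≠ ⊥) := by
  by_cases hc : ∀ x ∈ ker f, (f * g - g * f) x = 0
  · left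
    intro x hx
    rw [SetLike.mem_coe, mem_ker] at hx ⊢
    simpa [hx] using hc x (mem_ker.mpr hx)
  · right
    push Not at hc
    obtain ⟨x, hx, hcx⟩ := hc
    have hspan : K ∙ (f * g - g * f) x = range (f * g - g * f) :=
      eq_of_le_of_finrank_le ((span_singleton_le_iff_mem _ _).mpr (mem_range_self _ x))
        (by rwa [finrank_span_singleton hcx])
    have hcx' : (f * g - g * f) x = f (g x) := by simp [mem_ker.mp hx]
    refine ⟨hspan ▸ (span_singleton_le_iff_mem _ _).mpr (hcx' ▸ mem_range_self f _), ?_⟩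
    exact hspan ▸ (span_singleton_eq_bot.not.mpr hcx)

lemma mapsTo_range_of_range_commutator_le {f g : End K V} (h : range (f * g - g * f) ≤ range f) :
    Set.MapsTo g (range f) (range f) := by
  rintro _ ⟨y, rfl⟩
  have hg : g (f y) = f (g y) - (f * g - g * f) y := by simp
  exact hg ▸ sub_mem (mem_range_self f _) (h (mem_range_self _ y))

theorem exists_common_eigenvector [IsAlgClosed K] [FiniteDimensional K V] [Nontrivial V]
    {f g : End K V} (h : finrank K (range (f * g - g * f)) ≤ 1) :
    ∃ v : V, v ≠ 0 ∧ (∃ a : K, f v = a • v) ∧ ∃ b : K, g v = b • v := by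
  induction hd : finrank K V using Nat.strong_induction_on generalizing V with
  | _ d ih =>
    obtain ⟨μ, hμ⟩ := exists_eigenvalue f
    set f' := f - μ • 1
    suffices ∃ v : V, v ≠ 0 ∧ (∃ a : K, f' v = a • v) ∧ ∃ b : K, g v = b • v by
      obtain ⟨v, hv, ⟨a, ha⟩, hg⟩ := this
      refine ⟨v, hv, ⟨a + μ, ?_⟩, hg⟩
      rw [add_smul, ← ha]
      simp [f']
    have hcomm : f' * g - g * f' = f * g - g * f := by
      rw [sub_mul, mul_sub, smul_mul_assoc, mul_smul_comm, one_mul, mul_one]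
      abel
    have hker : ker f' ≠ ⊥ := by rw [← eigenspace_def]; exact hμ
    rw [← hcomm] at h
    rcases mapsTo_ker_or_range_commutator_le f' g h with hg | ⟨hle, hne⟩
    · have : Nontrivial (ker f') := nontrivial_iff_ne_bot.mpr hker
      obtain ⟨b, hb⟩ := exists_eigenvalue (g.restrict hg)
      obtain ⟨w, hw⟩ := hb.exists_hasEigenvector
      refine ⟨w, fun h0 ↦ hw.2 (Subtype.ext h0), ⟨0, by simp⟩, b, ?_⟩
      exact congrArg Subtype.val hw.apply_eq_smul
    · have : Nontrivial (range f') := nontrivial_iff_ne_bot.mpr (ne_bot_of_le_ne_bot hne hle)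
      have hlt : finrank K (range f') < d :=
        hd ▸ finrank_lt (mt (ker_eq_bot_iff_range_eq_top.mpr) hker)
      obtain ⟨u, hu, ⟨a, ha⟩, b, hb⟩ := ih _ hlt
        (le_trans (finrank_range_commutator_restrict_le (fun x _ ↦ mem_range_self f' x)
          (mapsTo_range_of_range_commutator_le hle)) h) rfl
      exact ⟨u, fun h0 ↦ hu (Subtype.ext h0), ⟨a, congrArg Subtype.val ha⟩, b,
        congrArg Subtype.val hb⟩

theorem exists_common_invariant_hyperplane [IsAlgClosed K] [FiniteDimensional K V] [Nontrivial V]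
    {f g : End K V} (h : finrank K (range (f * g - g * f)) ≤ 1) :
    ∃ W : Submodule K V, finrank K W + 1 = finrank K V ∧ Set.MapsTo f W W ∧ Set.MapsTo g W W := by
  obtain ⟨φ, hφ, ⟨a, ha⟩, b, hb⟩ :=
    exists_common_eigenvector (f := f.dualMap) (g := g.dualMap)
      (by rwa [finrank_range_commutator_dualMap])
  have hmaps {u : End K V} {c : K} (hu : u.dualMap φ = c • φ) :
      Set.MapsTo u (ker φ) (ker φ) := by
    intro x hx
    rw [SetLike.mem_coe, mem_ker] at hx ⊢
    rw [← dualMap_apply, hu, LinearMap.smul_apply, hx, smul_zero]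
  exact ⟨ker φ, Dual.finrank_ker_add_one_of_ne_zero hφ, hmaps ha, hmaps hb⟩

lemma exists_basis_castSucc_eq {n : ℕ} {W : Submodule K V} (c : Basis (Fin n) K W)
    (hW : finrank K W + 1 = finrank K V) :
    ∃ b : Basis (Fin (n + 1)) K V, ∀ i, b i.castSucc = c i := by
  have hcard : Fintype.card (Fin (n + 1)) = finrank K V := by
    rw [Fintype.card_fin, ← hW, finrank_eq_card_basis c, Fintype.card_fin]
  have : FiniteDimensional K V := .of_finrank_pos (by omega)
  obtain ⟨y, -, hy⟩ := SetLike.exists_of_lt (lt_top_iff_ne_top.mpr fun hW' : W = ⊤ ↦ by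
    subst hW'; rw [finrank_top] at hW; omega)
  have hspan : span K (Set.range (W.subtype ∘ c)) = W := by
    rw [Set.range_comp, span_image, c.span_eq, map_subtype_top]
  have hli : LinearIndependent K (Fin.snoc (W.subtype ∘ c) y : Fin (n + 1) → V) :=
    linearIndependent_finSnoc.mpr ⟨c.linearIndependent.map' _ (ker_subtype _), by rwa [hspan]⟩
  exact ⟨basisOfLinearIndependentOfCardEqFinrank hli hcard, fun i ↦ by simp⟩

lemma mem_span_image_Iic_of_restrict {n : ℕ} {W : Submodule K V} {u : End K V}
    (hu : Set.MapsTo u W W) {b : Basis (Fin (n + 1)) K V} {c : Basis (Fin n) K W}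
    (hbc : ∀ i, b i.castSucc = c i) (hc : ∀ i, u.restrict hu (c i) ∈ span K (c '' Set.Iic i))
    (j : Fin (n + 1)) : u (b j) ∈ span K (b '' Set.Iic j) := by
  induction j using Fin.lastCases with
  | last =>
    rw [show Set.Iic (Fin.last n) = Set.univ from Set.eq_univ_of_forall Fin.le_last,
      Set.image_univ, b.span_eq]
    trivial
  | cast i =>
    have hmap := mem_map_of_mem (f := W.subtype) (hc i)
    rw [← span_image, ← Set.image_comp] at hmap
    rw [hbc]
    refine span_mono ?_ hmap
    rintro _ ⟨l, hl, rfl⟩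
    exact ⟨l.castSucc, Fin.castSucc_le_castSucc_iff.mpr hl, hbc l⟩

theorem exists_basis_mem_span_image_Iic [IsAlgClosed K] [FiniteDimensional K V] {n : ℕ}
    (hn : finrank K V = n) {f g : End K V} (h : finrank K (range (f * g - g * f)) ≤ 1) :
    ∃ b : Basis (Fin n) K V,
      (∀ j, f (b j) ∈ span K (b '' Set.Iic j)) ∧ ∀ j, g (b j) ∈ span K (b '' Set.Iic j) := by
  induction n generalizing V with
  | zero =>
    have : Subsingleton V := finrank_zero_iff.mp hn
    exact ⟨Basis.empty V, finZeroElim, finZeroElim⟩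
  | succ n ih =>
    have : Nontrivial V := nontrivial_of_finrank_eq_succ hn
    obtain ⟨W, hW, hf, hg⟩ := exists_common_invariant_hyperplane h
    obtain ⟨c, hcf, hcg⟩ :=
      ih (V := W) (by omega) ((finrank_range_commutator_restrict_le hf hg).trans h)
    obtain ⟨b, hbc⟩ := exists_basis_castSucc_eq c hW
    exact ⟨b, mem_span_image_Iic_of_restrict hf hbc hcf, mem_span_image_Iic_of_restrict hg hbc hcg⟩

end

lemma toMatrix_blockTriangular_of_mem_span_image_Iic {ι : Type*} [Fintype ι] [DecidableEq ι]
    [LinearOrder ι] {b : Basis ι K V} {f : End K V}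
    (hf : ∀ j, f (b j) ∈ span K (b '' Set.Iic j)) :
    (LinearMap.toMatrix b b f).BlockTriangular id := by
  intro i j hij
  rw [LinearMap.toMatrix_apply]
  exact Finsupp.notMem_support_iff.mp fun hi ↦ hij.not_ge ((b.mem_span_image.mp (hf j)) hi)

end Module.End

theorem simultaneous_triangularisation_of_rank_le_one_commutator_general
    {k : Type*} [Field k] [IsAlgClosed k]
    {n : ℕ}
    (B₁ B₂ : Matrix (Fin n) (Fin n) k)
    (hrank : (B₁ * B₂ - B₂ * B₁).rank ≤ 1) :
    ∃ g : GL (Fin n) k,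
      ((g : Matrix (Fin n) (Fin n) k) * B₁ *
        ((g⁻¹ : GL (Fin n) k) : Matrix (Fin n) (Fin n) k)).BlockTriangular id ∧
      ((g : Matrix (Fin n) (Fin n) k) * B₂ *
        ((g⁻¹ : GL (Fin n) k) : Matrix (Fin n) (Fin n) k)).BlockTriangular id := by
  have hcomm : (B₁ * B₂ - B₂ * B₁).toLin' = B₁.toLin' * B₂.toLin' - B₂.toLin' * B₁.toLin' := by
    rw [map_sub, Matrix.toLin'_mul, Matrix.toLin'_mul]; rfl
  obtain ⟨b, h₁, h₂⟩ := Module.End.exists_basis_mem_span_image_Iic (finrank_fin_fun k)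
    (f := B₁.toLin') (g := B₂.toLin') (by rwa [← hcomm])
  set e := Pi.basisFun k (Fin n)
  have hconj (A : Matrix (Fin n) (Fin n) k) :
      b.toMatrix e * A * e.toMatrix b = LinearMap.toMatrix b b A.toLin' := by
    have hA : LinearMap.toMatrix e e A.toLin' = A := by
      rw [LinearMap.toMatrix_eq_toMatrix', LinearMap.toMatrix'_toLin']
    conv_lhs => rw [← hA]
    exact basis_toMatrix_mul_linearMap_toMatrix_mul_basis_toMatrix ..
  refine ⟨⟨b.toMatrix e, e.toMatrix b, b.toMatrix_mul_toMatrix_flip e,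
    e.toMatrix_mul_toMatrix_flip b⟩, ?_, ?_⟩
  · exact hconj B₁ ▸ Module.End.toMatrix_blockTriangular_of_mem_span_image_Iic h₁
  · exact hconj B₂ ▸ Module.End.toMatrix_blockTriangular_of_mem_span_image_Iic h₂

/-- The linear algebra statement used in the proof of Lemma 2.9: two `n × n` matrices
whose commutator has rank at most one can be simultaneously conjugated to upper
triangular form. -/
theorem simultaneous_triangularisation_of_rank_le_one_commutator
    {k : Type*} [Field k] [IsAlgClosed k] [CharZero k]
    {n : ℕ} (hn : 1 ≤ n)
    (B₁ B₂ : Matrix (Fin n) (Fin n) k)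
    (hrank : (B₁ * B₂ - B₂ * B₁).rank ≤ 1) :
    ∃ g : GL (Fin n) k,
      ((g : Matrix (Fin n) (Fin n) k) * B₁ *
        ((g⁻¹ : GL (Fin n) k) : Matrix (Fin n) (Fin n) k)).BlockTriangular id ∧
      ((g : Matrix (Fin n) (Fin n) k) * B₂ *
        ((g⁻¹ : GL (Fin n) k) : Matrix (Fin n) (Fin n) k)).BlockTriangular id :=
  simultaneous_triangularisation_of_rank_le_one_commutator_general B₁ B₂ hrank
end

section
/- Let n ≥ 1. Consider triples (B₁, B₂, i) where B₁, B₂ are commuting endomorphisms of kⁿ and i ∈ kⁿ is a cyclic vector for B₁, B₂, with GL(n,k) acting by g·(B₁,B₂,i) = (gB₁g⁻¹, gB₂g⁻¹, g·i). The assignment sending (B₁, B₂, i) to the ideal I = { p ∈ k[x,y] : p(B₁,B₂)·i = 0 } induces a well-defined bijection between the set of GL(n,k)-orbits of such triples and the set of ideals I ⊆ k[x,y] with dim_k k[x,y]/I = n. (This is the set-theoretic content of Theorem 2.2, the GIT construction of Hilb^{[n]}(𝔸²).) -/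
noncomputable section

/-- Evaluation of `p ∈ k[x,y]` at a pair of (commuting) endomorphisms, substituting
`B₁, B₂` for `x, y` monomial by monomial. -/
def evalEnd2 {k : Type*} [Field k] {V : Type*} [AddCommGroup V] [Module k V]
    (p : MvPolynomial (Fin 2) k) (B₁ B₂ : Module.End k V) : Module.End k V :=
  (AddMonoidAlgebra.coeff p).sum fun m c => c • (B₁ ^ m 0 * B₂ ^ m 1)

/-- A triple `(B₁, B₂, i)` consisting of two commuting endomorphisms of `kⁿ` together
with a cyclic vector. -/
def IsGoodTriple {k : Type*} [Field k] {n : ℕ}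
    (T : Module.End k (Fin n → k) × Module.End k (Fin n → k) × (Fin n → k)) : Prop :=
  T.1 * T.2.1 = T.2.1 * T.1 ∧ IsCyclicVector ![T.1, T.2.1] T.2.2

/-- The set of polynomials `p ∈ k[x,y]` with `p(B₁,B₂)·i = 0`. -/
def annihilatorSet {k : Type*} [Field k] {n : ℕ}
    (T : Module.End k (Fin n → k) × Module.End k (Fin n → k) × (Fin n → k)) :
    Set (MvPolynomial (Fin 2) k) :=
  {p | evalEnd2 p T.1 T.2.1 T.2.2 = 0}

/-- Two triples lie in the same `GL(n,k)`-orbit. -/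
def SameOrbit {k : Type*} [Field k] {n : ℕ}
    (T T' : Module.End k (Fin n → k) × Module.End k (Fin n → k) × (Fin n → k)) : Prop :=
  ∃ g : (Module.End k (Fin n → k))ˣ,
    T'.1 = (g : Module.End k (Fin n → k)) * T.1 * ((g⁻¹ : (Module.End k (Fin n → k))ˣ)) ∧
    T'.2.1 = (g : Module.End k (Fin n → k)) * T.2.1 * ((g⁻¹ : (Module.End k (Fin n → k))ˣ)) ∧
    T'.2.2 = (g : Module.End k (Fin n → k)) T.2.2


/-!
Commuting endomorphisms `B₁, B₂` of `V` are the images of `x, y` under an algebra map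
`ψ : k[x,y] → End V`, and `i` is cyclic exactly when `p ↦ ψ p i` is surjective. Its kernel is the
annihilator ideal `I`, so `k[x,y]/I ≅ V`. Two cyclic triples with the same `I` are both identified
with `k[x,y]/I` compatibly with the action of `k[x,y]`, and the composite `kⁿ ≅ kⁿ` conjugates one
triple into the other. Conversely, for `dim k[x,y]/I = n`, multiplication by `x` and `y` on
`k[x,y]/I ≅ kⁿ` with the cyclic vector `1` is a triple with annihilator `I`.
-/

open MvPolynomial

section EvalCommutePair

variable {k A : Type*} [CommSemiring k] [Semiring A] [Algebra k A] {a b : A}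

def Commute.monomialHom {M : Type*} [Monoid M] {a b : M} (h : Commute a b) :
    Multiplicative (Fin 2 →₀ ℕ) →* M where
  toFun m := a ^ m.toAdd 0 * b ^ m.toAdd 1
  map_one' := by simp
  map_mul' m m' := by
    simp only [toAdd_mul, Finsupp.add_apply, pow_add]
    rw [mul_assoc, mul_assoc, (h.pow_pow _ _).left_comm]

variable (k) in
def evalCommutePair (h : Commute a b) : MvPolynomial (Fin 2) k →ₐ[k] A :=
  AddMonoidAlgebra.lift k A (Fin 2 →₀ ℕ) h.monomialHom

@[simp] lemma evalCommutePair_X_zero (h : Commute a b) : evalCommutePair k h (X 0) = a := by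
  simp [evalCommutePair, X, monomial, Commute.monomialHom]

@[simp] lemma evalCommutePair_X_one (h : Commute a b) : evalCommutePair k h (X 1) = b := by
  simp [evalCommutePair, X, monomial, Commute.monomialHom]

lemma evalCommutePair_comp_X (h : Commute a b) : evalCommutePair k h ∘ X = ![a, b] := by
  ext s
  fin_cases s <;> simp

lemma evalCommutePair_eq (ψ : MvPolynomial (Fin 2) k →ₐ[k] A) (h : Commute (ψ (X 0)) (ψ (X 1))) :
    evalCommutePair k h = ψ := by
  ext s
  fin_cases s <;> simp

lemma AlgHom.comp_evalCommutePair {B : Type*} [Semiring B] [Algebra k B] (f : A →ₐ[k] B)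
    (h : Commute a b) : f.comp (evalCommutePair k h) = evalCommutePair k (h.map f) := by
  ext s
  fin_cases s <;> simp

end EvalCommutePair

lemma evalEnd2_eq_evalCommutePair {k V : Type*} [Field k] [AddCommGroup V] [Module k V]
    {B₁ B₂ : Module.End k V} (h : Commute B₁ B₂) (p : MvPolynomial (Fin 2) k) :
    evalEnd2 p B₁ B₂ = evalCommutePair k h p := by
  rw [evalCommutePair, AddMonoidAlgebra.lift_apply]
  rfl

section CyclicRepresentation

variable {k R V W : Type*} [Field k] [CommRing R] [Algebra k R]
  [AddCommGroup V] [Module k V] [AddCommGroup W] [Module k W]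
  (ψ : R →ₐ[k] Module.End k V) (i : V)

def orbitMap : R →ₗ[k] V := LinearMap.applyₗ i ∘ₗ ψ.toLinearMap

@[simp] lemma orbitMap_apply (p : R) : orbitMap ψ i p = ψ p i := rfl

lemma orbitMap_mul (p q : R) : orbitMap ψ i (p * q) = ψ p (orbitMap ψ i q) := by
  simp [Module.End.mul_apply]

def annIdeal : Ideal R where
  __ := LinearMap.ker (orbitMap ψ i)
  smul_mem' p q hq := by
    simp_all [Module.End.mul_apply]

lemma mem_annIdeal {p : R} : p ∈ annIdeal ψ i ↔ ψ p i = 0 := Iff.rfl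

lemma finrank_quotient_annIdeal (hs : Function.Surjective (orbitMap ψ i)) :
    Module.finrank k (R ⧸ annIdeal ψ i) = Module.finrank k V :=
  ((Submodule.Quotient.restrictScalarsEquiv k (annIdeal ψ i)).symm.trans
    ((orbitMap ψ i).quotKerEquivOfSurjective hs)).finrank_eq

lemma orbitMap_conj (e : V ≃ₗ[k] W) :
    orbitMap ((e.conjAlgEquiv k : Module.End k V →ₐ[k] Module.End k W).comp ψ) (e i) =
      e.toLinearMap ∘ₗ orbitMap ψ i := by
  ext p
  simp [LinearEquiv.conjAlgEquiv_apply]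

lemma annIdeal_conj (e : V ≃ₗ[k] W) :
    annIdeal ((e.conjAlgEquiv k : Module.End k V →ₐ[k] Module.End k W).comp ψ) (e i) =
      annIdeal ψ i := by
  ext p
  simp [mem_annIdeal, LinearEquiv.conjAlgEquiv_apply]

variable {ψ i} in
lemma exists_conj_eq_of_annIdeal_eq {ψ' : R →ₐ[k] Module.End k W} {i' : W}
    (hs : Function.Surjective (orbitMap ψ i)) (hs' : Function.Surjective (orbitMap ψ' i'))
    (hann : annIdeal ψ i = annIdeal ψ' i') :
    ∃ e : V ≃ₗ[k] W,
      (e.conjAlgEquiv k : Module.End k V →ₐ[k] Module.End k W).comp ψ = ψ' ∧ e i = i' := by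
  have hker : LinearMap.ker (orbitMap ψ i) = LinearMap.ker (orbitMap ψ' i') :=
    congrArg (Submodule.restrictScalars k) hann
  let e : V ≃ₗ[k] W := ((orbitMap ψ i).quotKerEquivOfSurjective hs).symm ≪≫ₗ
    Submodule.quotEquivOfEq _ _ hker ≪≫ₗ (orbitMap ψ' i').quotKerEquivOfSurjective hs'
  have he : ∀ p, e (orbitMap ψ i p) = orbitMap ψ' i' p := fun p => by
    simp only [e, LinearEquiv.trans_apply, LinearMap.quotKerEquivOfSurjective_symm_apply,
      Submodule.quotEquivOfEq_mk, LinearMap.quotKerEquivOfSurjective_apply_mk]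
  refine ⟨e, ?_, by simpa using he 1⟩
  ext p v : 2
  obtain ⟨q, hq⟩ := hs (e.symm v)
  change e (ψ p (e.symm v)) = ψ' p v
  rw [← hq, ← e.apply_symm_apply v, ← hq]
  calc e (ψ p (orbitMap ψ i q)) = e (orbitMap ψ i (p * q)) := by rw [orbitMap_mul]
    _ = orbitMap ψ' i' (p * q) := he _
    _ = ψ' p (e (orbitMap ψ i q)) := by rw [orbitMap_mul, he]

end CyclicRepresentation

lemma isCyclicVector_iff_surjective_orbitMap {k V : Type*} [Field k] [AddCommGroup V]
    [Module k V] {m : ℕ} (ψ : MvPolynomial (Fin m) k →ₐ[k] Module.End k V) (i : V) :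
    IsCyclicVector (fun s => ψ (X s)) i ↔ Function.Surjective (orbitMap ψ i) := by
  constructor
  · intro hc
    rw [← LinearMap.range_eq_top]
    refine hc _ ⟨1, by simp⟩ ?_
    rintro s _ ⟨p, rfl⟩
    exact ⟨X s * p, orbitMap_mul ψ i _ _⟩
  · intro hs W hi hW
    have hinv : ∀ p, ∀ v ∈ W, ψ p v ∈ W := by
      intro p
      induction p using MvPolynomial.induction_on with
      | C a => intro v hv; simpa [Module.algebraMap_end_apply] using W.smul_mem a hv
      | add p q hp hq => intro v hv; simpa using W.add_mem (hp v hv) (hq v hv)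
      | mul_X p s hp => intro v hv; rw [map_mul, Module.End.mul_apply]; exact hp _ (hW s v hv)
    exact eq_top_iff.2 fun v _ => by obtain ⟨p, rfl⟩ := hs v; exact hinv p i hi

section QuotientRepresentation

variable (k : Type*) {R : Type*} [Field k] [CommRing R] [Algebra k R] (I : Ideal R)

def quotientLmul : R →ₐ[k] Module.End k (R ⧸ I) :=
  (Algebra.lmul k (R ⧸ I)).comp (Ideal.Quotient.mkₐ k I)

lemma orbitMap_quotientLmul_one :
    orbitMap (quotientLmul k I) 1 = (Ideal.Quotient.mkₐ k I).toLinearMap := by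
  ext p
  simp [quotientLmul]

lemma annIdeal_quotientLmul_one : annIdeal (quotientLmul k I) 1 = I := by
  ext p
  simp [mem_annIdeal, quotientLmul, Ideal.Quotient.eq_zero_iff_mem]

variable {k I} in
lemma exists_surjective_orbitMap_annIdeal_eq {n : ℕ} (hn : 0 < n)
    (hI : Module.finrank k (R ⧸ I) = n) :
    ∃ (ψ : R →ₐ[k] Module.End k (Fin n → k)) (i : Fin n → k),
      Function.Surjective (orbitMap ψ i) ∧ annIdeal ψ i = I := by
  have : Module.Finite k (R ⧸ I) := Module.finite_of_finrank_pos (hI ▸ hn)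
  let e := (Module.finBasisOfFinrankEq k (R ⧸ I) hI).equivFun
  refine ⟨(e.conjAlgEquiv k : _ →ₐ[k] _).comp (quotientLmul k I), e 1, ?_, ?_⟩
  · rw [orbitMap_conj, orbitMap_quotientLmul_one]
    exact e.surjective.comp (Ideal.Quotient.mkₐ_surjective k I)
  · rw [annIdeal_conj, annIdeal_quotientLmul_one]

end QuotientRepresentation

section Triples

variable {k : Type*} [Field k] {n : ℕ} {B₁ B₂ : Module.End k (Fin n → k)} {i : Fin n → k}

lemma annihilatorSet_mk_eq_annIdeal (h : Commute B₁ B₂) :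
    annihilatorSet (B₁, B₂, i) = annIdeal (evalCommutePair k h) i := by
  ext p
  simp [annihilatorSet, mem_annIdeal, evalEnd2_eq_evalCommutePair h]

lemma isGoodTriple_mk_iff :
    IsGoodTriple (B₁, B₂, i) ↔
      ∃ h : Commute B₁ B₂, Function.Surjective (orbitMap (evalCommutePair k h) i) := by
  simp only [← isCyclicVector_iff_surjective_orbitMap, ← Function.comp_def (evalCommutePair k _),
    evalCommutePair_comp_X]
  exact ⟨fun ⟨h, hc⟩ => ⟨h, hc⟩, fun ⟨h, hc⟩ => ⟨h, hc⟩⟩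

lemma annihilatorSet_eq_iff_sameOrbit
    {T T' : Module.End k (Fin n → k) × Module.End k (Fin n → k) × (Fin n → k)}
    (hT : IsGoodTriple T) (hT' : IsGoodTriple T') :
    annihilatorSet T = annihilatorSet T' ↔ SameOrbit T T' := by
  obtain ⟨B₁, B₂, i⟩ := T
  obtain ⟨B₁', B₂', i'⟩ := T'
  obtain ⟨h, hs⟩ := isGoodTriple_mk_iff.1 hT
  obtain ⟨h', hs'⟩ := isGoodTriple_mk_iff.1 hT'
  rw [annihilatorSet_mk_eq_annIdeal h, annihilatorSet_mk_eq_annIdeal h', SetLike.coe_set_eq]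
  constructor
  · intro hann
    obtain ⟨e, hψ, hi⟩ := exists_conj_eq_of_annIdeal_eq hs hs' hann
    refine ⟨LinearMap.GeneralLinearGroup.ofLinearEquiv e, ?_, ?_, hi.symm⟩
    · rw [← evalCommutePair_X_zero (k := k) h', ← hψ, AlgHom.comp_apply, evalCommutePair_X_zero]
      rfl
    · rw [← evalCommutePair_X_one (k := k) h', ← hψ, AlgHom.comp_apply, evalCommutePair_X_one]
      rfl
  · rintro ⟨g, rfl, rfl, rfl⟩
    let e := LinearMap.GeneralLinearGroup.toLinearEquiv g
    rw [← annIdeal_conj (evalCommutePair k h) i e, AlgHom.comp_evalCommutePair]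
    rfl

end Triples

theorem orbits_biject_with_ideals_general
    {k : Type*} [Field k]
    {n : ℕ} (hn : 1 ≤ n) :
    (∀ T : Module.End k (Fin n → k) × Module.End k (Fin n → k) × (Fin n → k),
      IsGoodTriple T → ∃ I : Ideal (MvPolynomial (Fin 2) k),
        (I : Set (MvPolynomial (Fin 2) k)) = annihilatorSet T ∧
        Module.finrank k (MvPolynomial (Fin 2) k ⧸ I) = n) ∧
    (∀ T T' : Module.End k (Fin n → k) × Module.End k (Fin n → k) × (Fin n → k),
      IsGoodTriple T → IsGoodTriple T' →
        (annihilatorSet T = annihilatorSet T' ↔ SameOrbit T T')) ∧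
    (∀ I : Ideal (MvPolynomial (Fin 2) k),
      Module.finrank k (MvPolynomial (Fin 2) k ⧸ I) = n →
        ∃ T : Module.End k (Fin n → k) × Module.End k (Fin n → k) × (Fin n → k),
          IsGoodTriple T ∧ (I : Set (MvPolynomial (Fin 2) k)) = annihilatorSet T) := by
  refine ⟨?_, fun T T' => annihilatorSet_eq_iff_sameOrbit, fun I hI => ?_⟩
  · rintro ⟨B₁, B₂, i⟩ hT
    obtain ⟨h, hs⟩ := isGoodTriple_mk_iff.1 hT
    refine ⟨annIdeal (evalCommutePair k h) i, (annihilatorSet_mk_eq_annIdeal h).symm, ?_⟩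
    rw [finrank_quotient_annIdeal _ _ hs, Module.finrank_fin_fun]
  · obtain ⟨ψ, i, hs, rfl⟩ := exists_surjective_orbitMap_annIdeal_eq hn hI
    have h : Commute (ψ (X 0)) (ψ (X 1)) := (Commute.all _ _).map ψ
    refine ⟨(ψ (X 0), ψ (X 1), i), isGoodTriple_mk_iff.2 ⟨h, ?_⟩, ?_⟩
    · rwa [evalCommutePair_eq]
    · rw [annihilatorSet_mk_eq_annIdeal h, evalCommutePair_eq]

/-- The set-theoretic content of Theorem 2.2: the assignment
`(B₁,B₂,i) ↦ { p ∈ k[x,y] : p(B₁,B₂)·i = 0 }` induces a well-defined bijection between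
`GL(n,k)`-orbits of triples (commuting endomorphisms with a cyclic vector) and ideals
`I ⊆ k[x,y]` with `dim_k k[x,y]/I = n`. -/
theorem orbits_biject_with_ideals
    {k : Type*} [Field k] [IsAlgClosed k] [CharZero k]
    {n : ℕ} (hn : 1 ≤ n) :
    (∀ T : Module.End k (Fin n → k) × Module.End k (Fin n → k) × (Fin n → k),
      IsGoodTriple T → ∃ I : Ideal (MvPolynomial (Fin 2) k),
        (I : Set (MvPolynomial (Fin 2) k)) = annihilatorSet T ∧
        Module.finrank k (MvPolynomial (Fin 2) k ⧸ I) = n) ∧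
    (∀ T T' : Module.End k (Fin n → k) × Module.End k (Fin n → k) × (Fin n → k),
      IsGoodTriple T → IsGoodTriple T' →
        (annihilatorSet T = annihilatorSet T' ↔ SameOrbit T T')) ∧
    (∀ I : Ideal (MvPolynomial (Fin 2) k),
      Module.finrank k (MvPolynomial (Fin 2) k ⧸ I) = n →
        ∃ T : Module.End k (Fin n → k) × Module.End k (Fin n → k) × (Fin n → k),
          IsGoodTriple T ∧ (I : Set (MvPolynomial (Fin 2) k)) = annihilatorSet T) :=
  orbits_biject_with_ideals_general hn
end
end
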